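/- Let λ ∈ ℝ and let F : ℝ² → ℝ be ℤ²-periodic, continuously differentiable away from ℤ², and satisfy F(x,y) = F(−x,y) = F(x,−y) = F(y,x). Let (α, β) : [0,T) → ℝ² be a C¹ solution of α̇ = −2(∂_x F(2α, 0) + 4πα)/(1+λ²), β̇ = 2λ(∂_x F(2α, 0) + 4πα)/(1+λ²), with 2α(t) ∉ ℤ for all t. Then the curves a₁(t) = (0.5 + α(t), 0.5 + β(t)) and a₂(t) = (0.5 − α(t), 0.5 + β(t)) solve the reduced dynamical law ȧ_j − λ d_j 𝕁 ȧ_j = −(1/π) ∇_{a_j} W(a) for the two-vortex configuration with degrees d₁ = 1, d₂ = −1 and momentum branch q(a) = 2π(a₁ − a₂). Moreover λ α(t) + β(t) is constant in t, so the trajectory of (α(t), β(t)) lies on a straight line. -/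

import Mathlib

/-!
The reflection symmetries `F(x,y) = F(-x,y) = F(x,-y)` force `∇F(±x, 0) = (±∂ₓF(x,0), 0)`.
Since `a₁ - a₂ = (2α, 0)`, both vortex equations therefore reduce to one and the same
`2 × 2` linear system for `(α̇, β̇)`, which the given ODE solves; that ODE also makes
`λα̇ + β̇` vanish, so `λα + β` is constant.
-/

noncomputable section

open Real Set

/-- The symplectic matrix `𝕁` (rows `(0,1)` and `(−1,0)`) acting on `ℝ²`. -/
def Jmat (v : ℝ × ℝ) : ℝ × ℝ := (v.2, -v.1)

/-- The gradient vector of a function `F : ℝ² → ℝ`. -/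
def gradF (F : ℝ × ℝ → ℝ) (p : ℝ × ℝ) : ℝ × ℝ :=
  (fderiv ℝ F p (1, 0), fderiv ℝ F p (0, 1))

theorem Convex.eq_of_hasDerivWithinAt_eq_zero {E : Type*} [NormedAddCommGroup E]
    [NormedSpace ℝ E] {f : ℝ → E} {s : Set ℝ} {x y : ℝ} (hs : Convex ℝ s)
    (hf : ∀ t ∈ s, HasDerivWithinAt f 0 s t) (hx : x ∈ s) (hy : y ∈ s) : f x = f y := by
  simpa [sub_eq_zero, eq_comm] using
    hs.norm_image_sub_le_of_norm_hasDerivWithin_le hf (C := 0) (by simp) hx hy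

theorem fderiv_apply_eq_of_comp_eq {𝕜 E G : Type*} [NontriviallyNormedField 𝕜]
    [NormedAddCommGroup E] [NormedSpace 𝕜 E] [NormedAddCommGroup G] [NormedSpace 𝕜 G]
    {f : E → G} (σ : E →L[𝕜] E) (hf : f ∘ σ = f) {p : E}
    (hd : DifferentiableAt 𝕜 f (σ p)) (v : E) :
    fderiv 𝕜 f p v = fderiv 𝕜 f (σ p) (σ v) := by
  have h := hd.hasFDerivAt.comp p σ.hasFDerivAt
  rw [hf] at h
  rw [h.fderiv]
  rfl

theorem gradF_neg_fst {F : ℝ × ℝ → ℝ} (hF : ∀ x y, F (-x, y) = F (x, y)) {x y : ℝ}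
    (hd : DifferentiableAt ℝ F (x, y)) :
    gradF F (-x, y) = (-(gradF F (x, y)).1, (gradF F (x, y)).2) := by
  let σ := (-ContinuousLinearMap.id ℝ ℝ).prodMap (ContinuousLinearMap.id ℝ ℝ)
  have hσ : ∀ p, σ p = (-p.1, p.2) := fun _ => rfl
  have hchain := fderiv_apply_eq_of_comp_eq σ (funext fun p => (hσ p ▸ hF p.1 p.2))
    (p := (-x, y)) (by rwa [hσ, neg_neg])
  have hneg : ((-1 : ℝ), (0 : ℝ)) = -(1, 0) := by simp
  simp only [gradF, hchain, hσ, neg_neg, neg_zero, hneg, map_neg]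

theorem gradF_snd_eq_zero {F : ℝ × ℝ → ℝ} (hF : ∀ x y, F (x, -y) = F (x, y)) {x : ℝ}
    (hd : DifferentiableAt ℝ F (x, 0)) : (gradF F (x, 0)).2 = 0 := by
  let σ := (ContinuousLinearMap.id ℝ ℝ).prodMap (-ContinuousLinearMap.id ℝ ℝ)
  have hσ : ∀ p, σ p = (p.1, -p.2) := fun _ => rfl
  have hchain := fderiv_apply_eq_of_comp_eq σ (funext fun p => (hσ p ▸ hF p.1 p.2))
    (p := (x, 0)) (by rwa [hσ, neg_zero]) (0, 1)
  rw [hσ, hσ, neg_zero, ← neg_zero, ← Prod.neg_mk, map_neg, neg_zero] at hchain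
  exact CharZero.eq_neg_self_iff.mp hchain

/-- The reduced law for `a₁, a₂` after substituting `∇F(a₁ - a₂) = (c, 0)`,
`∇F(a₂ - a₁) = (-c, 0)` and `q = (4πα, 0)`. -/
theorem two_vortex_reduced_law_of_ode (lam α c α' β' : ℝ)
    (hα' : α' = -2 * (c + 4*π*α) / (1 + lam^2))
    (hβ' : β' = 2*lam * (c + 4*π*α) / (1 + lam^2)) :
    ((α', β') : ℝ × ℝ) - (lam * 1) • Jmat (α', β')
        = (-(1/π)) • ((2*π*(1:ℝ)) • (-((-1:ℝ) • (c, 0)) + (4*π*α, 0)))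
      ∧ ((-α', β') : ℝ × ℝ) - (lam * (-1)) • Jmat (-α', β')
        = (-(1/π)) • ((2*π*(-1:ℝ)) • (-((1:ℝ) • (-c, 0)) + (4*π*α, 0))) := by
  have hlam : (1:ℝ) + lam^2 ≠ 0 := by positivity
  subst hα' hβ'
  simp only [Jmat, Prod.smul_mk, Prod.mk_sub_mk, Prod.mk_add_mk, Prod.neg_mk, smul_eq_mul,
    Prod.mk.injEq]
  refine ⟨⟨?_, ?_⟩, ?_, ?_⟩ <;> field_simp <;> ring

theorem two_vortex_symmetric_solution_general (lam T : ℝ) (hT : 0 < T)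
    (F : ℝ × ℝ → ℝ)
    (hsym : ∀ x y : ℝ, F (x, y) = F (-x, y) ∧ F (x, y) = F (x, -y) ∧ F (x, y) = F (y, x))
    (hFC1 : ∀ p : ℝ × ℝ, (∀ m n : ℤ, p ≠ ((m : ℝ), (n : ℝ))) → ContDiffAt ℝ 1 F p)
    (α β α' β' : ℝ → ℝ)
    (hα : ∀ t ∈ Ico (0:ℝ) T, HasDerivWithinAt α (α' t) (Ico (0:ℝ) T) t)
    (hβ : ∀ t ∈ Ico (0:ℝ) T, HasDerivWithinAt β (β' t) (Ico (0:ℝ) T) t)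
    (hODE : ∀ t ∈ Ico (0:ℝ) T,
      α' t = -2 * ((gradF F (2*α t, 0)).1 + 4*π*(α t)) / (1 + lam^2)
        ∧ β' t = 2*lam * ((gradF F (2*α t, 0)).1 + 4*π*(α t)) / (1 + lam^2))
    (hnd : ∀ t ∈ Ico (0:ℝ) T, ∀ m : ℤ, 2*α t ≠ (m : ℝ))
    (a₁ a₂ : ℝ → ℝ × ℝ)
    (ha₁ : ∀ s : ℝ, a₁ s = (0.5 + α s, 0.5 + β s))
    (ha₂ : ∀ s : ℝ, a₂ s = (0.5 - α s, 0.5 + β s))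
    (qv : ℝ → ℝ × ℝ)
    (hqv : ∀ s : ℝ, qv s = (2*π) • (a₁ s - a₂ s)) :
    (∀ t ∈ Ico (0:ℝ) T,
        HasDerivWithinAt a₁ (α' t, β' t) (Ico (0:ℝ) T) t
      ∧ HasDerivWithinAt a₂ (-(α' t), β' t) (Ico (0:ℝ) T) t
      ∧ ((α' t, β' t) : ℝ × ℝ) - (lam * 1) • Jmat (α' t, β' t)
          = (-(1/π)) • ((2*π*(1:ℝ)) • (-((-1:ℝ) • gradF F (a₁ t - a₂ t)) + qv t))
      ∧ ((-(α' t), β' t) : ℝ × ℝ) - (lam * (-1)) • Jmat (-(α' t), β' t)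
          = (-(1/π)) • ((2*π*(-1:ℝ)) • (-((1:ℝ) • gradF F (a₂ t - a₁ t)) + qv t)))
    ∧ (∀ t ∈ Ico (0:ℝ) T, lam * α t + β t = lam * α 0 + β 0) := by
  have hFx : ∀ x y, F (-x, y) = F (x, y) := fun x y => ((hsym x y).1).symm
  have hFy : ∀ x y, F (x, -y) = F (x, y) := fun x y => ((hsym x y).2.1).symm
  have hdiff : ∀ t ∈ Ico 0 T, DifferentiableAt ℝ F (2 * α t, 0) := fun t ht =>
    (hFC1 _ fun m _ h => hnd t ht m (congrArg Prod.fst h)).differentiableAt one_ne_zero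
  refine ⟨fun t ht => ?_, fun t ht => ?_⟩
  · have h₁₂ : a₁ t - a₂ t = (2 * α t, 0) := by
      rw [ha₁, ha₂, Prod.mk_sub_mk]; congr 1 <;> ring
    have h₂₁ : a₂ t - a₁ t = (-(2 * α t), 0) := by
      rw [← neg_sub, h₁₂, Prod.neg_mk, neg_zero]
    have hq : qv t = (4 * π * α t, 0) := by
      rw [hqv, h₁₂, Prod.smul_mk, smul_eq_mul, smul_zero]; congr 1; ring
    obtain ⟨c, hc⟩ : ∃ c, gradF F (2 * α t, 0) = (c, 0) :=
      ⟨_, Prod.ext rfl (gradF_snd_eq_zero hFy (hdiff t ht))⟩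
    rw [h₁₂, h₂₁, gradF_neg_fst hFx (hdiff t ht), hc, hq]
    obtain ⟨hA, hB⟩ := hODE t ht
    rw [hc] at hA hB
    refine ⟨?_, ?_, two_vortex_reduced_law_of_ode lam (α t) _ _ _ hA hB⟩
    · rw [funext ha₁]
      exact ((hα t ht).const_add 0.5).prodMk ((hβ t ht).const_add 0.5)
    · rw [funext ha₂]
      exact ((hα t ht).const_sub 0.5).prodMk ((hβ t ht).const_add 0.5)
  · refine (convex_Ico 0 T).eq_of_hasDerivWithinAt_eq_zero
      (f := fun s => lam * α s + β s) (fun s hs => ?_) ht ⟨le_rfl, hT⟩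
    obtain ⟨hA, hB⟩ := hODE s hs
    have hlam : (1:ℝ) + lam^2 ≠ 0 := by positivity
    refine (((hα s hs).const_mul lam).add (hβ s hs)).congr_deriv ?_
    rw [hA, hB]
    field_simp
    ring

/-- for the symmetric two-vortex ansatz, the reduced ODE system for
`(α, β)` produces a solution of the reduced dynamical law
`ȧ_j − λ d_j 𝕁 ȧ_j = −(1/π) ∇_{a_j} W(a)` (degrees `d₁ = 1, d₂ = −1`, momentum branch
`q(a) = 2π(a₁ − a₂)`), and `λα + β` is constant so the trajectory is a straight line. -/
theorem two_vortex_symmetric_solution (lam T : ℝ) (hT : 0 < T)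
    (F : ℝ × ℝ → ℝ)
    (hper : ∀ (x y : ℝ) (m n : ℤ), F (x + m, y + n) = F (x, y))
    (hsym : ∀ x y : ℝ, F (x, y) = F (-x, y) ∧ F (x, y) = F (x, -y) ∧ F (x, y) = F (y, x))
    (hFC1 : ∀ p : ℝ × ℝ, (∀ m n : ℤ, p ≠ ((m : ℝ), (n : ℝ))) → ContDiffAt ℝ 1 F p)
    (α β α' β' : ℝ → ℝ)
    (hα : ∀ t ∈ Ico (0:ℝ) T, HasDerivWithinAt α (α' t) (Ico (0:ℝ) T) t)
    (hβ : ∀ t ∈ Ico (0:ℝ) T, HasDerivWithinAt β (β' t) (Ico (0:ℝ) T) t)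
    (hODE : ∀ t ∈ Ico (0:ℝ) T,
      α' t = -2 * ((gradF F (2*α t, 0)).1 + 4*π*(α t)) / (1 + lam^2)
        ∧ β' t = 2*lam * ((gradF F (2*α t, 0)).1 + 4*π*(α t)) / (1 + lam^2))
    (hnd : ∀ t ∈ Ico (0:ℝ) T, ∀ m : ℤ, 2*α t ≠ (m : ℝ))
    (a₁ a₂ : ℝ → ℝ × ℝ)
    (ha₁ : ∀ s : ℝ, a₁ s = (0.5 + α s, 0.5 + β s))
    (ha₂ : ∀ s : ℝ, a₂ s = (0.5 - α s, 0.5 + β s))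
    (qv : ℝ → ℝ × ℝ)
    (hqv : ∀ s : ℝ, qv s = (2*π) • (a₁ s - a₂ s)) :
    (∀ t ∈ Ico (0:ℝ) T,
        HasDerivWithinAt a₁ (α' t, β' t) (Ico (0:ℝ) T) t
      ∧ HasDerivWithinAt a₂ (-(α' t), β' t) (Ico (0:ℝ) T) t
      ∧ ((α' t, β' t) : ℝ × ℝ) - (lam * 1) • Jmat (α' t, β' t)
          = (-(1/π)) • ((2*π*(1:ℝ)) • (-((-1:ℝ) • gradF F (a₁ t - a₂ t)) + qv t))
      ∧ ((-(α' t), β' t) : ℝ × ℝ) - (lam * (-1)) • Jmat (-(α' t), β' t)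
          = (-(1/π)) • ((2*π*(-1:ℝ)) • (-((1:ℝ) • gradF F (a₂ t - a₁ t)) + qv t)))
    ∧ (∀ t ∈ Ico (0:ℝ) T, lam * α t + β t = lam * α 0 + β 0) :=
  two_vortex_symmetric_solution_general lam T hT F hsym hFC1 α β α' β' hα hβ hODE hnd a₁ a₂ ha₁ ha₂
    qv hqv
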